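/- arXiv:2012.12576 — 7 statements merged into one kernel-verified Lean document; each statement's English description precedes it below -/
import Mathlib

section
/- A morphism f = (f_T, f_W) of coisotropic index sets is a regular epimorphism in the category of coisotropic index sets if and only if f_T and f_W are surjective and f_W(M_0) = N_0. -/
/-! A regular epimorphism is extremal: if it factors through a componentwise injective
morphism, that morphism has a section. Applied to the factorisation of `f` through its image
`(range f_T, range f_W, f_W '' M_0)`, this gives the three conditions. Conversely, under
those conditions `f` is the coequalizer of its kernel pair: morphisms out of `M` that agree on
the kernel pair descend along the surjections `f_T`, `f_W`, and the null set descends because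
`N_0` is covered by `f_W '' M_0`. -/

universe u

structure CoisoSet : Type (u + 1) where
  T : Type u
  W : Type u
  N : Set W
  str : W → T

structure CoisoSetHom (M P : CoisoSet.{u}) : Type u where
  T : M.T → P.T
  W : M.W → P.W
  comm : ∀ x : M.W, T (M.str x) = P.str (W x)
  null : ∀ x ∈ M.N, W x ∈ P.N

def CoisoSetHom.id (M : CoisoSet) : CoisoSetHom M M :=
  ⟨fun x => x, fun x => x, fun _ => rfl, fun _ h => h⟩

def CoisoSetHom.comp {M P Q : CoisoSet} (g : CoisoSetHom P Q)
    (f : CoisoSetHom M P) : CoisoSetHom M Q :=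
  ⟨g.T ∘ f.T, g.W ∘ f.W,
    fun x => by simp only [Function.comp_apply, f.comm, g.comm],
    fun x hx => g.null _ (f.null _ hx)⟩

def IsCoequalizerOf {M P G : CoisoSet} (Φ : CoisoSetHom M P)
    (a b : CoisoSetHom G M) : Prop :=
  Φ.comp a = Φ.comp b ∧
    ∀ (H : CoisoSet) (h : CoisoSetHom M H), h.comp a = h.comp b →
      ∃! u : CoisoSetHom P H, u.comp Φ = h

def IsRegularEpi {M P : CoisoSet} (Φ : CoisoSetHom M P) : Prop :=
  ∃ (G : CoisoSet) (a b : CoisoSetHom G M), IsCoequalizerOf Φ a b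

attribute [ext] CoisoSetHom

namespace CoisoSetHom

variable {M P Q H : CoisoSet.{u}}

lemma id_comp (f : CoisoSetHom M P) : (id P).comp f = f := rfl

lemma comp_assoc {R : CoisoSet.{u}} (h : CoisoSetHom Q R) (g : CoisoSetHom P Q)
    (f : CoisoSetHom M P) : (h.comp g).comp f = h.comp (g.comp f) := rfl

def image (f : CoisoSetHom M P) : CoisoSet.{u} where
  T := Set.range f.T
  W := Set.range f.W
  N := {w | w.1 ∈ f.W '' M.N}
  str w := ⟨P.str w.1, by
    obtain ⟨m, hm⟩ := w.2
    exact ⟨M.str m, by rw [f.comm, hm]⟩⟩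

def toImage (f : CoisoSetHom M P) : CoisoSetHom M f.image :=
  ⟨Set.rangeFactorization f.T, Set.rangeFactorization f.W,
    fun x => Subtype.ext (f.comm x), fun x hx => ⟨x, hx, rfl⟩⟩

def imageι (f : CoisoSetHom M P) : CoisoSetHom f.image P :=
  ⟨Subtype.val, Subtype.val, fun _ => rfl, fun _ hw => by
    obtain ⟨m, hm, hmw⟩ := hw
    exact hmw ▸ f.null m hm⟩

lemma imageι_comp_toImage (f : CoisoSetHom M P) : f.imageι.comp f.toImage = f := rfl

lemma eq_of_comp_eq_of_surjective {f : CoisoSetHom M P} (hT : Function.Surjective f.T)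
    (hW : Function.Surjective f.W) {u v : CoisoSetHom P H} (huv : u.comp f = v.comp f) :
    u = v := by
  ext1
  · exact hT.injective_comp_right (congrArg CoisoSetHom.T huv)
  · exact hW.injective_comp_right (congrArg CoisoSetHom.W huv)

lemma exists_comp_eq_of_surjective {f : CoisoSetHom M P} (hT : Function.Surjective f.T)
    (hW : Function.Surjective f.W) (hN : P.N ⊆ f.W '' M.N) (h : CoisoSetHom M H)
    (hhT : ∀ m m', f.T m = f.T m' → h.T m = h.T m')
    (hhW : ∀ m m', f.W m = f.W m' → h.W m = h.W m') :
    ∃ u : CoisoSetHom P H, u.comp f = h := by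
  refine ⟨⟨h.T ∘ Function.surjInv hT, h.W ∘ Function.surjInv hW,
    fun w => ?_, fun w hw => ?_⟩, ?_⟩
  · rw [Function.comp_apply, Function.comp_apply, ← h.comm]
    apply hhT
    rw [Function.surjInv_eq hT, f.comm, Function.surjInv_eq hW]
  · obtain ⟨m, hm, rfl⟩ := hN hw
    rw [Function.comp_apply, hhW _ m (Function.surjInv_eq hW _)]
    exact h.null m hm
  · ext m
    · exact hhT _ _ (Function.surjInv_eq hT _)
    · exact hhW _ _ (Function.surjInv_eq hW _)

def kernelPair (f : CoisoSetHom M P) : CoisoSet.{u} where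
  T := {p : M.T × M.T // f.T p.1 = f.T p.2}
  W := {p : M.W × M.W // f.W p.1 = f.W p.2}
  N := {p | p.1.1 ∈ M.N ∧ p.1.2 ∈ M.N}
  str p := ⟨(M.str p.1.1, M.str p.1.2), by rw [f.comm, f.comm, p.2]⟩

def kernelPairFst (f : CoisoSetHom M P) : CoisoSetHom f.kernelPair M :=
  ⟨fun p => p.1.1, fun p => p.1.1, fun _ => rfl, fun _ hp => hp.1⟩

def kernelPairSnd (f : CoisoSetHom M P) : CoisoSetHom f.kernelPair M :=
  ⟨fun p => p.1.2, fun p => p.1.2, fun _ => rfl, fun _ hp => hp.2⟩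

lemma comp_kernelPairFst_eq_comp_kernelPairSnd (f : CoisoSetHom M P) :
    f.comp f.kernelPairFst = f.comp f.kernelPairSnd := by
  ext p
  · exact p.2
  · exact p.2

lemma isCoequalizerOf_kernelPair {f : CoisoSetHom M P} (hT : Function.Surjective f.T)
    (hW : Function.Surjective f.W) (hN : P.N ⊆ f.W '' M.N) :
    IsCoequalizerOf f f.kernelPairFst f.kernelPairSnd := by
  refine ⟨f.comp_kernelPairFst_eq_comp_kernelPairSnd, fun H h hh => ?_⟩
  obtain ⟨u, hu⟩ := exists_comp_eq_of_surjective hT hW hN h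
    (fun m m' hm => congrFun (congrArg CoisoSetHom.T hh) ⟨(m, m'), hm⟩)
    (fun m m' hm => congrFun (congrArg CoisoSetHom.W hh) ⟨(m, m'), hm⟩)
  exact ⟨u, hu, fun v hv => eq_of_comp_eq_of_surjective hT hW (hv.trans hu.symm)⟩

end CoisoSetHom

namespace IsRegularEpi

open CoisoSetHom

variable {M P Q H : CoisoSet.{u}} {f : CoisoSetHom M P}

lemma eq_of_comp_eq (hf : IsRegularEpi f) {u v : CoisoSetHom P H}
    (huv : u.comp f = v.comp f) : u = v := by
  obtain ⟨G, a, b, hab, huniv⟩ := hf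
  have hcomp : (u.comp f).comp a = (u.comp f).comp b := by
    rw [comp_assoc, comp_assoc, hab]
  obtain ⟨w, -, hw⟩ := huniv H (u.comp f) hcomp
  exact (hw u rfl).trans (hw v huv.symm).symm

lemma exists_section_of_comp_eq (hf : IsRegularEpi f) {ι : CoisoSetHom Q P}
    (hιT : Function.Injective ι.T) (hιW : Function.Injective ι.W) {g : CoisoSetHom M Q}
    (hg : ι.comp g = f) : ∃ s : CoisoSetHom P Q, ι.comp s = CoisoSetHom.id P := by
  have ⟨G, a, b, hab, huniv⟩ := hf
  have hιab : ι.comp (g.comp a) = ι.comp (g.comp b) := by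
    rw [← comp_assoc, ← comp_assoc, hg, hab]
  have hgab : g.comp a = g.comp b := by
    ext x
    · exact hιT (congrFun (congrArg CoisoSetHom.T hιab) x)
    · exact hιW (congrFun (congrArg CoisoSetHom.W hιab) x)
  obtain ⟨s, hs, -⟩ := huniv Q g hgab
  exact ⟨s, hf.eq_of_comp_eq (by rw [comp_assoc, hs, hg, id_comp])⟩

end IsRegularEpi

/-- a morphism of coisotropic index sets is a regular
epimorphism iff both components are surjective and the Wobs-component maps
the null set onto the null set. -/
theorem coisoSetHom_regularEpi_iff {M P : CoisoSet} (f : CoisoSetHom M P) :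
    IsRegularEpi f ↔
      Function.Surjective f.T ∧ Function.Surjective f.W ∧
        f.W '' M.N = P.N := by
  constructor
  · intro hf
    obtain ⟨s, hs⟩ := hf.exists_section_of_comp_eq Subtype.val_injective Subtype.val_injective
      f.imageι_comp_toImage
    have hsT (t : P.T) : (s.T t).1 = t := congrFun (congrArg CoisoSetHom.T hs) t
    have hsW (w : P.W) : (s.W w).1 = w := congrFun (congrArg CoisoSetHom.W hs) w
    refine ⟨fun t => hsT t ▸ (s.T t).2, fun w => hsW w ▸ (s.W w).2, ?_⟩
    refine (Set.image_subset_iff.2 f.null).antisymm fun w hw => ?_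
    exact hsW w ▸ s.null w hw
  · rintro ⟨hT, hW, hN⟩
    exact ⟨_, _, _, CoisoSetHom.isCoequalizerOf_kernelPair hT hW hN.ge⟩
end

section
/- There exists a regular epimorphism Φ of coisotropic index sets which does not split, i.e. has no section Ψ with Φ ∘ Ψ = id. Concretely, with M = ({0,1}, {0,1}, ∅) with ι_M = id and N = ({0}, {0,1}, ∅) with ι_N the constant map, the morphism Φ = (0, id) is a regular epimorphism admitting no section. -/
/-! Coisotropic index sets and their morphisms. -/

universe u

/-- The coisotropic index set `({0,1}, {0,1}, ∅)` with `ι = id`. -/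
def exM : CoisoSet.{0} := ⟨Bool, Bool, ∅, fun x => x⟩

/-- The coisotropic index set `({0}, {0,1}, ∅)` with `ι` constant. -/
def exN : CoisoSet.{0} := ⟨PUnit, Bool, ∅, fun _ => PUnit.unit⟩

/-- The morphism `Φ = (0, id) : exM → exN`. -/
def exΦ : CoisoSetHom exM exN :=
  ⟨fun _ => PUnit.unit, fun x => x, fun _ => rfl, fun _ hx => hx.elim⟩

namespace CoisoSetHom

variable {M P : CoisoSet.{u}}

theorem str_W_eq_of_str_eq (f : CoisoSetHom M P) {x y : M.W} (h : M.str x = M.str y) :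
    P.str (f.W x) = P.str (f.W y) := by
  rw [← f.comm, ← f.comm, h]

theorem W_injective_of_comp_eq_id {Φ : CoisoSetHom M P} {Ψ : CoisoSetHom P M}
    (h : Φ.comp Ψ = id P) : Function.Injective Ψ.W :=
  Function.LeftInverse.injective (g := Φ.W) fun x => congrFun (congrArg CoisoSetHom.W h) x

theorem not_exists_section_of_str_eq (Φ : CoisoSetHom M P) (hM : Function.Injective M.str)
    {x y : P.W} (hxy : x ≠ y) (hstr : P.str x = P.str y) :
    ¬ ∃ Ψ : CoisoSetHom P M, Φ.comp Ψ = id P := by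
  rintro ⟨Ψ, hΨ⟩
  exact hxy (W_injective_of_comp_eq_id hΨ (hM (Ψ.str_W_eq_of_str_eq hstr)))

end CoisoSetHom

namespace CoisoSet

variable (M : CoisoSet.{u})

def collapseT : CoisoSet.{u} := ⟨PUnit, M.W, M.N, fun _ => PUnit.unit⟩

def pairsT : CoisoSet.{u} := ⟨M.T × M.T, PEmpty, ∅, PEmpty.elim⟩

def toCollapseT : CoisoSetHom M M.collapseT :=
  ⟨fun _ => PUnit.unit, fun x => x, fun _ => rfl, fun _ hx => hx⟩

def fstT : CoisoSetHom M.pairsT M := ⟨Prod.fst, PEmpty.elim, nofun, nofun⟩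

def sndT : CoisoSetHom M.pairsT M := ⟨Prod.snd, PEmpty.elim, nofun, nofun⟩

theorem isCoequalizerOf_toCollapseT (t₀ : M.T) :
    IsCoequalizerOf M.toCollapseT M.fstT M.sndT := by
  refine ⟨CoisoSetHom.ext rfl (funext nofun), fun H h hh => ?_⟩
  have h_const (t : M.T) : h.T t = h.T t₀ := congrFun (congrArg CoisoSetHom.T hh) (t, t₀)
  refine ⟨⟨fun _ => h.T t₀, h.W, fun x => (h_const _).symm.trans (h.comm x), h.null⟩,
    CoisoSetHom.ext (funext fun t => (h_const t).symm) rfl, fun u hu => ?_⟩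
  ext t
  · exact congrFun (congrArg CoisoSetHom.T hu) t₀
  · exact congrFun (congrArg CoisoSetHom.W hu) t

end CoisoSet

/-- the concrete morphism `Φ = (0, id)` is a regular
epimorphism of coisotropic index sets admitting no section; in particular
not every regular epimorphism of coisotropic index sets splits. -/
theorem regularEpi_not_split :
    IsRegularEpi exΦ ∧
      ¬ ∃ Ψ : CoisoSetHom exN exM, exΦ.comp Ψ = CoisoSetHom.id exN :=
  ⟨⟨_, _, _, exM.isCoequalizerOf_toCollapseT true⟩,
    exΦ.not_exists_section_of_str_eq Function.injective_id Bool.false_ne_true rfl⟩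
end

section
/- For a coisotropic index set P, the following are equivalent: (i) every regular epimorphism M → P splits; (ii) for every regular epimorphism Φ : M → N and every morphism Ψ : P → N there exists χ : P → M with Φ ∘ χ = Ψ; (iii) the map ι_P : P_W → P_T is injective. -/
/-!
Projectivity splits into the two components. On `W` a lift along a regular epimorphism always
exists, since the null set of the target is the image of the null set of the source. On `T` the
lift is forced on the image of `ι_P` by compatibility, and it is well defined there exactly when
`ι_P` is injective; off the image any preimage will do. Conversely, `P` is covered by the regular
epimorphism from `(P_W ⊕ P_T, P_W, P_0, inl)`, whose structure map is injective, and a splitting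
of it embeds `ι_P` into `inl`.
-/

universe u

def IsRegEpi {M P : CoisoSet} (f : CoisoSetHom M P) : Prop :=
  Function.Surjective f.T ∧ Function.Surjective f.W ∧ f.W '' M.N = P.N

open Function Set

theorem Function.exists_lift_of_surjective_of_surjOn {α β γ : Type*} {p : α → β}
    (hp : Surjective p) {s : Set α} {t : Set β} (hst : SurjOn p s t) (g : γ → β) {u : Set γ}
    (hg : MapsTo g u t) : ∃ k : γ → α, p ∘ k = g ∧ MapsTo k u s := by
  have hlift : ∀ c, ∃ a, p a = g c ∧ (c ∈ u → a ∈ s) := by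
    intro c
    by_cases hc : c ∈ u
    · obtain ⟨a, ha, hpa⟩ := hst (hg hc)
      exact ⟨a, hpa, fun _ => ha⟩
    · obtain ⟨a, hpa⟩ := hp (g c)
      exact ⟨a, hpa, fun h => absurd h hc⟩
  choose k hpk hks using hlift
  exact ⟨k, funext hpk, hks⟩

theorem Function.exists_lift_of_injective_of_surjective {α β γ δ : Type*} {i : α → β}
    (hi : Injective i) {p : γ → δ} (hp : Surjective p) (g : α → γ) (h : β → δ)
    (hsq : p ∘ g = h ∘ i) : ∃ k : β → γ, k ∘ i = g ∧ p ∘ k = h := by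
  refine ⟨extend i g (surjInv hp ∘ h), extend_comp hi g _, funext fun b => ?_⟩
  by_cases hb : ∃ a, i a = b
  · obtain ⟨a, rfl⟩ := hb
    rw [comp_apply, hi.extend_apply]
    exact congrFun hsq a
  · rw [comp_apply, extend_apply' _ _ _ hb]
    exact surjInv_eq hp (h b)

namespace CoisoSetHom

variable {M N P : CoisoSet.{u}}

theorem exists_lift_of_injective_str (hP : Injective P.str) {Φ : CoisoSetHom M N}
    (hΦ : IsRegEpi Φ) (Ψ : CoisoSetHom P N) : ∃ χ : CoisoSetHom P M, Φ.comp χ = Ψ := by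
  obtain ⟨hT, hW, hN⟩ := hΦ
  obtain ⟨χW, hχW, hχN⟩ := exists_lift_of_surjective_of_surjOn hW hN.symm.subset Ψ.W Ψ.null
  have hsq : Φ.T ∘ (M.str ∘ χW) = Ψ.T ∘ P.str := by
    funext w
    simp only [comp_apply, Φ.comm, Ψ.comm, ← hχW]
  obtain ⟨χT, hχT, hΦχT⟩ := exists_lift_of_injective_of_surjective hP hT _ _ hsq
  exact ⟨⟨χT, χW, congrFun hχT, hχN⟩, CoisoSetHom.ext hΦχT hχW⟩

theorem injective_W_of_comp_eq_id {Φ : CoisoSetHom M P} {Ψ : CoisoSetHom P M}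
    (h : Φ.comp Ψ = CoisoSetHom.id P) : Injective Ψ.W :=
  LeftInverse.injective fun x => congrFun (congrArg CoisoSetHom.W h) x

theorem injective_str_of_injective_W (f : CoisoSetHom P M) (hM : Injective M.str)
    (hf : Injective f.W) : Injective P.str := by
  have hsq : f.T ∘ P.str = M.str ∘ f.W := funext f.comm
  exact Injective.of_comp (hsq ▸ hM.comp hf)

end CoisoSetHom

namespace CoisoSet

def sumCover (P : CoisoSet.{u}) : CoisoSet.{u} :=
  ⟨P.W ⊕ P.T, P.W, P.N, Sum.inl⟩

def sumCoverHom (P : CoisoSet.{u}) : CoisoSetHom P.sumCover P :=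
  ⟨Sum.elim P.str _root_.id, _root_.id, fun _ => rfl, fun _ h => h⟩

theorem isRegEpi_sumCoverHom (P : CoisoSet.{u}) : IsRegEpi P.sumCoverHom :=
  ⟨fun t => ⟨Sum.inr t, rfl⟩, surjective_id, image_id P.N⟩

end CoisoSet

/-- for a coisotropic index set `P` the following are
equivalent: (i) every regular epimorphism onto `P` splits; (ii) `P` has
the lifting property against all regular epimorphisms; (iii) `ι_P` is
injective. -/
theorem coisoSet_projective_tfae (P : CoisoSet) :
    List.TFAE
      [∀ (M : CoisoSet) (Φ : CoisoSetHom M P), IsRegEpi Φ →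
          ∃ Ψ : CoisoSetHom P M, Φ.comp Ψ = CoisoSetHom.id P,
        ∀ (M N : CoisoSet) (Φ : CoisoSetHom M N), IsRegEpi Φ →
          ∀ Ψ : CoisoSetHom P N, ∃ χ : CoisoSetHom P M, Φ.comp χ = Ψ,
        Function.Injective P.str] := by
  tfae_have 1 → 3 := fun hsplit => by
    obtain ⟨Ψ, hΨ⟩ := hsplit _ P.sumCoverHom P.isRegEpi_sumCoverHom
    exact Ψ.injective_str_of_injective_W Sum.inl_injective
      (CoisoSetHom.injective_W_of_comp_eq_id hΨ)
  tfae_have 3 → 2 := fun hP _ _ _ hΦ Ψ => CoisoSetHom.exists_lift_of_injective_str hP hΦ Ψ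
  tfae_have 2 → 1 := fun hlift M Φ hΦ => hlift M P Φ hΦ (CoisoSetHom.id P)
  tfae_finish
end

section
/- Let A be a coisotropic algebra and M a coisotropic index set. Then the triple A^(M) with Total-component the free A_T-module on M_T, Wobs-component the free A_W-module on M_W, and Null-component A_W^(M_0) + A_0^(M_W) inside A_W^(M_W), together with the map sending the basis element indexed by m ∈ M_W to the basis element indexed by ι_M(m) (extended along ι_A), is a coisotropic right A-module; moreover it satisfies the universal property: for every coisotropic A-module E and every morphism φ : M → E of coisotropic index sets (where E is regarded as a coisotropic index set by forgetting structure) there is a unique morphism Φ : A^(M) → E of coisotropic A-modules extending φ. -/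
/-! Coisotropic index sets and their morphisms. -/

universe u

/-! Coisotropic algebras and coisotropic (right) modules over them.
Following the paper, a coisotropic algebra is a triple `(A_T, A_W, A_0)`
of unital `k`-algebras with a two-sided ideal `A_0 ⊆ A_W` and a unital
algebra morphism `ι : A_W → A_T`.  Modules are formalized with Lean's
(left) module conventions. -/

structure CoisoAlg (k : Type u) [CommRing k] : Type (u + 1) where
  T : Type u
  W : Type u
  [ringT : Ring T]
  [ringW : Ring W]
  [algT : Algebra k T]
  [algW : Algebra k W]
  /-- `N` is a left ideal ... -/
  N : Ideal W
  /-- ... which is also a right ideal, hence two-sided. -/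
  N_mul_right : ∀ x ∈ N, ∀ a : W, x * a ∈ N
  str : W →ₐ[k] T

attribute [instance] CoisoAlg.ringT CoisoAlg.ringW CoisoAlg.algT CoisoAlg.algW

variable {k : Type u} [CommRing k]

/-- A coisotropic module over the coisotropic algebra `A`. -/
structure CoisoRMod (A : CoisoAlg k) : Type (u + 1) where
  T : Type u
  W : Type u
  [addT : AddCommGroup T]
  [addW : AddCommGroup W]
  [modT : Module A.T T]
  [modW : Module A.W W]
  N : Submodule A.W W
  null_smul : ∀ a ∈ A.N, ∀ x : W, a • x ∈ N
  str : W → T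
  str_add : ∀ x y : W, str (x + y) = str x + str y
  str_smul : ∀ (a : A.W) (x : W), str (a • x) = A.str a • str x

attribute [instance] CoisoRMod.addT CoisoRMod.addW CoisoRMod.modT CoisoRMod.modW

variable {A : CoisoAlg k}

theorem CoisoRMod.str_zero (E : CoisoRMod A) : E.str 0 = 0 := by
  have h := E.str_add 0 0
  rw [add_zero] at h
  exact (left_eq_add.mp h)

/-- Morphisms of coisotropic modules over `A`. -/
structure CoisoRModHom (E F : CoisoRMod A) : Type u where
  T : E.T →ₗ[A.T] F.T
  W : E.W →ₗ[A.W] F.W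
  comm : ∀ x : E.W, T (E.str x) = F.str (W x)
  null : ∀ x ∈ E.N, W x ∈ F.N

theorem CoisoRModHom.ext' {E F : CoisoRMod A} {f g : CoisoRModHom E F}
    (h1 : f.T = g.T) (h2 : f.W = g.W) : f = g := by
  cases f; cases g; cases h1; cases h2; rfl

def CoisoRModHom.id (E : CoisoRMod A) : CoisoRModHom E E :=
  ⟨LinearMap.id, LinearMap.id, fun _ => rfl, fun _ h => h⟩

def CoisoRModHom.comp {E F G : CoisoRMod A} (g : CoisoRModHom F G)
    (f : CoisoRModHom E F) : CoisoRModHom E G :=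
  ⟨g.T ∘ₗ f.T, g.W ∘ₗ f.W,
    fun x => by simp only [LinearMap.comp_apply, f.comm, g.comm],
    fun x hx => g.null _ (f.null _ hx)⟩

/-- Regular epimorphisms of coisotropic modules: both components surjective
and the null submodule mapped onto the null submodule. -/
def IsRegEpiMod {E F : CoisoRMod A} (Φ : CoisoRModHom E F) : Prop :=
  Function.Surjective Φ.T ∧ Function.Surjective Φ.W ∧
    ∀ y ∈ F.N, ∃ x ∈ E.N, Φ.W x = y

/-- A coisotropic module is regular projective if morphisms out of it lift
along regular epimorphisms. -/
def RegProjective (P : CoisoRMod A) : Prop :=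
  ∀ (E F : CoisoRMod A) (Φ : CoisoRModHom E F) (Ψ : CoisoRModHom P F),
    IsRegEpiMod Φ → ∃ χ : CoisoRModHom P E, Φ.comp χ = Ψ

/-- Isomorphisms of coisotropic modules. -/
def IsIsoMod {E F : CoisoRMod A} (Φ : CoisoRModHom E F) : Prop :=
  ∃ Ψ : CoisoRModHom F E,
    Φ.comp Ψ = CoisoRModHom.id F ∧ Ψ.comp Φ = CoisoRModHom.id E

/-- The free coisotropic `A`-module on a coisotropic index set `M`. -/
noncomputable def freeMod (A : CoisoAlg k) (M : CoisoSet.{u}) : CoisoRMod A where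
  T := M.T →₀ A.T
  W := M.W →₀ A.W
  N :=
    { carrier := {f : M.W →₀ A.W | ∀ m, m ∉ M.N → f m ∈ A.N}
      add_mem' := fun hf hg m hm => by
        simpa [Finsupp.add_apply] using A.N.add_mem (hf m hm) (hg m hm)
      zero_mem' := fun m hm => by simp
      smul_mem' := fun a f hf m hm => by
        simpa [Finsupp.smul_apply] using A.N.smul_mem a (hf m hm) }
  null_smul := fun a ha f m hm => by
    simpa [Finsupp.smul_apply, smul_eq_mul] using A.N_mul_right a ha (f m)
  str := fun f => f.sum fun m a => Finsupp.single (M.str m) (A.str a)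
  str_add := fun f g =>
    Finsupp.sum_add_index' (fun m => by simp) (fun m a b => by
      simp [map_add, Finsupp.single_add])
  str_smul := fun a f => by
    classical
    show (a • f).sum (fun m b => Finsupp.single (M.str m) (A.str b)) =
      A.str a • f.sum (fun m b => Finsupp.single (M.str m) (A.str b))
    rw [Finsupp.sum_smul_index (fun m => by simp), Finsupp.smul_sum]
    refine Finsupp.sum_congr ?_
    intro m _
    rw [map_mul]
    exact (Finsupp.smul_single' _ _ _).symm

/-- `A` as a coisotropic module over itself. -/
def selfMod (A : CoisoAlg k) : CoisoRMod A where
  T := A.T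
  W := A.W
  N := A.N
  null_smul := fun a ha x => by
    simpa [smul_eq_mul] using A.N_mul_right a ha x
  str := A.str
  str_add := fun x y => map_add _ x y
  str_smul := fun a x => by simp [smul_eq_mul, map_mul]

/-- The coisotropic index set underlying a coisotropic module. -/
def toCoisoSet (E : CoisoRMod A) : CoisoSet.{u} :=
  ⟨E.T, E.W, (E.N : Set E.W), E.str⟩

/-! The `T`- and `W`-components of the extension are forced to be the linear
combinations of the values of `φ`. They commute with the structure maps because
both sides are additive and agree on basis vectors, where this is `φ.comm`.
A vector `f` of the null component is a sum of terms `f m • e_m` in which either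
`m ∈ M_0`, so `φ m ∈ E_0`, or `f m ∈ A_0`, so `f m • φ m ∈ A_0 • E_W ⊆ E_0`. -/

namespace freeMod

variable {M : CoisoSet.{u}} {E : CoisoRMod A}

theorem str_single (m : M.W) (a : A.W) :
    (freeMod A M).str (Finsupp.single m a) = Finsupp.single (M.str m) (A.str a) :=
  Finsupp.sum_single_index (h := fun m a => Finsupp.single (M.str m) (A.str a)) (by simp)

theorem linearCombination_mem_N {v : M.W → E.W} (hv : ∀ m ∈ M.N, v m ∈ E.N)
    {f : M.W →₀ A.W} (hf : f ∈ (freeMod A M).N) :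
    Finsupp.linearCombination A.W v f ∈ E.N := by
  rw [Finsupp.linearCombination_apply]
  refine Submodule.sum_mem _ fun m _ => ?_
  by_cases hm : m ∈ M.N
  · exact E.N.smul_mem _ (hv m hm)
  · exact E.null_smul _ (hf m hm) _

theorem linearCombination_str {vT : M.T → E.T} {vW : M.W → E.W}
    (hv : ∀ m, vT (M.str m) = E.str (vW m)) (f : M.W →₀ A.W) :
    Finsupp.linearCombination A.T vT ((freeMod A M).str f) =
      E.str (Finsupp.linearCombination A.W vW f) := by
  induction f using Finsupp.induction_linear with
  | zero => exact (map_zero _).trans E.str_zero.symm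
  -- `erw`: `(freeMod A M).T` has the addition of `M.T →₀ A.T` only up to unfolding
  | add f g hf hg => erw [(freeMod A M).str_add, map_add, map_add, E.str_add, hf, hg]
  | single m a =>
    rw [str_single, Finsupp.linearCombination_single, Finsupp.linearCombination_single,
      E.str_smul, hv]

noncomputable def lift (φ : CoisoSetHom M (toCoisoSet E)) : CoisoRModHom (freeMod A M) E where
  T := Finsupp.linearCombination A.T φ.T
  W := Finsupp.linearCombination A.W φ.W
  comm := linearCombination_str φ.comm
  null _ := linearCombination_mem_N φ.null

theorem lift_T_single (φ : CoisoSetHom M (toCoisoSet E)) (t : M.T) :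
    (lift φ).T (Finsupp.single t 1) = φ.T t :=
  (Finsupp.linearCombination_single _ _ _).trans (one_smul _ _)

theorem lift_W_single (φ : CoisoSetHom M (toCoisoSet E)) (m : M.W) :
    (lift φ).W (Finsupp.single m 1) = φ.W m :=
  (Finsupp.linearCombination_single _ _ _).trans (one_smul _ _)

theorem hom_ext {Φ Ψ : CoisoRModHom (freeMod A M) E}
    (hT : ∀ t : M.T, Φ.T (Finsupp.single t 1) = Ψ.T (Finsupp.single t 1))
    (hW : ∀ m : M.W, Φ.W (Finsupp.single m 1) = Ψ.W (Finsupp.single m 1)) : Φ = Ψ :=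
  CoisoRModHom.ext' (Finsupp.lhom_ext' fun t => LinearMap.ext_ring (hT t))
    (Finsupp.lhom_ext' fun m => LinearMap.ext_ring (hW m))

end freeMod

/-- (the construction `freeMod` above witnesses that the
triple `A^(M)` with null component `A_W^(M_0) + A_0^(M_W)` is a coisotropic
`A`-module;) the free coisotropic module `A^(M)` satisfies the universal
property: every morphism of coisotropic index sets from `M` to (the index
set underlying) a coisotropic `A`-module `E` extends uniquely to a morphism
of coisotropic `A`-modules `A^(M) → E`. -/
theorem freeMod_universal (A : CoisoAlg k) (M : CoisoSet.{u})
    (E : CoisoRMod A) (φ : CoisoSetHom M (toCoisoSet E)) :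
    ∃! Φ : CoisoRModHom (freeMod A M) E,
      (∀ t : M.T, Φ.T (Finsupp.single t 1) = φ.T t) ∧
      (∀ m : M.W, Φ.W (Finsupp.single m 1) = φ.W m) := by
  refine ⟨freeMod.lift φ, ⟨freeMod.lift_T_single φ, freeMod.lift_W_single φ⟩, ?_⟩
  rintro Φ ⟨hT, hW⟩
  exact freeMod.hom_ext (fun t => (hT t).trans (freeMod.lift_T_single φ t).symm)
    (fun m => (hW m).trans (freeMod.lift_W_single φ m).symm)
end

section
/- Splitting Lemma for coisotropic modules: a short exact sequence 0 → E →^Φ F →^Ψ G → 0 of coisotropic A-modules splits (i.e. Ψ admits a section) if and only if it is isomorphic as a sequence to 0 → E → E ⊕ G → G → 0 with the canonical inclusion and projection; here E ⊕ G is the componentwise direct sum. -/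
/-! Coisotropic index sets and their morphisms. -/

universe u

variable {k : Type u} [CommRing k]

variable {A : CoisoAlg k}

/-- Short exactness of `0 → E →Φ F →Ψ P → 0`: `Φ` is a monomorphism (both
components injective), the image of `Φ` equals the kernel of `Ψ` as
coisotropic submodules (in particular `Φ_W(E_0) = ker Ψ_W ∩ F_0`), and `Ψ`
is a regular epimorphism. -/
def ShortExact {E F P : CoisoRMod A} (Φ : CoisoRModHom E F)
    (Ψ : CoisoRModHom F P) : Prop :=
  Function.Injective Φ.T ∧ Function.Injective Φ.W ∧
    LinearMap.range Φ.T = LinearMap.ker Ψ.T ∧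
    LinearMap.range Φ.W = LinearMap.ker Ψ.W ∧
    Φ.W '' (E.N : Set E.W) =
      (LinearMap.ker Ψ.W : Set F.W) ∩ (F.N : Set F.W) ∧
    IsRegEpiMod Ψ

/-- The componentwise direct sum of coisotropic modules. -/
def dsum (E G : CoisoRMod A) : CoisoRMod A where
  T := E.T × G.T
  W := E.W × G.W
  N := E.N.prod G.N
  null_smul := fun a ha x =>
    ⟨E.null_smul a ha x.1, G.null_smul a ha x.2⟩
  str := fun x => (E.str x.1, G.str x.2)
  str_add := fun x y => by
    simp only [Prod.fst_add, Prod.snd_add, E.str_add, G.str_add]; rfl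
  str_smul := fun a x => by
    simp only [Prod.smul_fst, Prod.smul_snd, E.str_smul, G.str_smul]; rfl

/-- The canonical inclusion `E → E ⊕ G`. -/
def dsumInl (E G : CoisoRMod A) : CoisoRModHom E (dsum E G) where
  T := LinearMap.inl A.T E.T G.T
  W := LinearMap.inl A.W E.W G.W
  comm := fun x => by
    show (E.str x, (0 : G.T)) = (E.str x, G.str 0)
    rw [G.str_zero]
  null := fun x hx => ⟨hx, G.N.zero_mem⟩

/-- The canonical projection `E ⊕ G → G`. -/
def dsumPr (E G : CoisoRMod A) : CoisoRModHom (dsum E G) G where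
  T := LinearMap.snd A.T E.T G.T
  W := LinearMap.snd A.W E.W G.W
  comm := fun _ => rfl
  null := fun x hx => hx.2

/-! A section `s` of `Ψ` makes `(Φ, s) : E ⊕ G → F` bijective in each component, as for
modules. It is moreover an isomorphism of coisotropic modules because it is onto the null
parts: for `y ∈ F_0`, the element `y - s Ψ y` lies in `ker Ψ ∩ F_0 = Φ(E_0)`. Conversely, the
inverse of an isomorphism `F ≅ E ⊕ G` of sequences, restricted to `G`, is a section of `Ψ`. -/

theorem Function.Exact.bijective_coprod_of_comp_eq_id {R M N P : Type*} [Semiring R]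
    [AddCommGroup M] [AddCommGroup N] [AddCommGroup P] [Module R M] [Module R N] [Module R P]
    {f : M →ₗ[R] N} {g : N →ₗ[R] P} {l : P →ₗ[R] N} (h : Function.Exact f g)
    (hf : Function.Injective f) (hl : g ∘ₗ l = LinearMap.id) :
    Function.Bijective (f.coprod l) := by
  set e := h.splitSurjectiveEquiv hf ⟨l, hl⟩
  have hinl : e.1.symm ∘ₗ LinearMap.inl R M P = f := e.2.1.symm
  have hinr : e.1.symm ∘ₗ LinearMap.inr R M P = l :=
    congrArg Subtype.val ((h.splitSurjectiveEquiv hf).symm_apply_apply ⟨l, hl⟩)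
  have he : f.coprod l = e.1.symm :=
    LinearMap.prod_ext (by rw [LinearMap.coprod_inl, hinl]) (by rw [LinearMap.coprod_inr, hinr])
  rw [he]
  exact e.1.symm.bijective

namespace CoisoRModHom

variable {E F G H : CoisoRMod A}

theorem comp_assoc (h : CoisoRModHom G H) (g : CoisoRModHom F G) (f : CoisoRModHom E F) :
    (h.comp g).comp f = h.comp (g.comp f) :=
  rfl

theorem id_comp (f : CoisoRModHom E F) : (CoisoRModHom.id F).comp f = f :=
  rfl

theorem comp_id (f : CoisoRModHom E F) : f.comp (CoisoRModHom.id E) = f :=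
  rfl

def coprod (f : CoisoRModHom E F) (g : CoisoRModHom G F) : CoisoRModHom (dsum E G) F where
  T := f.T.coprod g.T
  W := f.W.coprod g.W
  comm := fun x => by
    show f.T (E.str x.1) + g.T (G.str x.2) = F.str (f.W x.1 + g.W x.2)
    rw [F.str_add, f.comm, g.comm]
  null := fun _ hx => F.N.add_mem (f.null _ hx.1) (g.null _ hx.2)

theorem coprod_comp_dsumInl (f : CoisoRModHom E F) (g : CoisoRModHom G F) :
    (f.coprod g).comp (dsumInl E G) = f :=
  ext' (LinearMap.coprod_inl _ _) (LinearMap.coprod_inl _ _)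

end CoisoRModHom

def dsumInr (E G : CoisoRMod A) : CoisoRModHom G (dsum E G) where
  T := LinearMap.inr A.T E.T G.T
  W := LinearMap.inr A.W E.W G.W
  comm := fun x => by
    show ((0 : E.T), G.str x) = (E.str 0, G.str x)
    rw [E.str_zero]
  null := fun _ hx => ⟨E.N.zero_mem, hx⟩

theorem dsumPr_comp_dsumInr (E G : CoisoRMod A) :
    (dsumPr E G).comp (dsumInr E G) = CoisoRModHom.id G :=
  rfl

theorem IsRegEpiMod.isIsoMod {E F : CoisoRMod A} {θ : CoisoRModHom E F} (hθ : IsRegEpiMod θ)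
    (hT : Function.Injective θ.T) (hW : Function.Injective θ.W) : IsIsoMod θ := by
  obtain ⟨hTsurj, hWsurj, hN⟩ := hθ
  let eT := LinearEquiv.ofBijective θ.T ⟨hT, hTsurj⟩
  let eW := LinearEquiv.ofBijective θ.W ⟨hW, hWsurj⟩
  refine ⟨⟨eT.symm, eW.symm, fun y => eT.symm_apply_eq.2 ?_, fun y hy => ?_⟩,
    CoisoRModHom.ext' (LinearMap.ext eT.apply_symm_apply) (LinearMap.ext eW.apply_symm_apply),
    CoisoRModHom.ext' (LinearMap.ext eT.symm_apply_apply) (LinearMap.ext eW.symm_apply_apply)⟩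
  · show F.str y = θ.T (E.str (eW.symm y))
    rw [θ.comm]
    exact congrArg F.str (eW.apply_symm_apply y).symm
  · obtain ⟨x, hx, rfl⟩ := hN y hy
    show eW.symm (eW x) ∈ E.N
    rwa [eW.symm_apply_apply]

namespace ShortExact

variable {E F G : CoisoRMod A} {Φ : CoisoRModHom E F} {Ψ : CoisoRModHom F G}

theorem exact_T (h : ShortExact Φ Ψ) : Function.Exact Φ.T Ψ.T :=
  LinearMap.exact_iff.2 h.2.2.1.symm

theorem exact_W (h : ShortExact Φ Ψ) : Function.Exact Φ.W Ψ.W :=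
  LinearMap.exact_iff.2 h.2.2.2.1.symm

theorem comp_coprod_eq_dsumPr (h : ShortExact Φ Ψ) {s : CoisoRModHom G F}
    (hs : Ψ.comp s = CoisoRModHom.id G) : Ψ.comp (Φ.coprod s) = dsumPr E G := by
  have hsT : Ψ.T ∘ₗ s.T = LinearMap.id := congrArg CoisoRModHom.T hs
  have hsW : Ψ.W ∘ₗ s.W = LinearMap.id := congrArg CoisoRModHom.W hs
  refine CoisoRModHom.ext' ?_ ?_
  · show Ψ.T ∘ₗ Φ.T.coprod s.T = LinearMap.snd A.T E.T G.T
    rw [LinearMap.comp_coprod, h.exact_T.linearMap_comp_eq_zero, hsT, LinearMap.coprod_zero_left]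
    rfl
  · show Ψ.W ∘ₗ Φ.W.coprod s.W = LinearMap.snd A.W E.W G.W
    rw [LinearMap.comp_coprod, h.exact_W.linearMap_comp_eq_zero, hsW, LinearMap.coprod_zero_left]
    rfl

theorem isIsoMod_coprod (h : ShortExact Φ Ψ) {s : CoisoRModHom G F}
    (hs : Ψ.comp s = CoisoRModHom.id G) : IsIsoMod (Φ.coprod s) := by
  have bijT := h.exact_T.bijective_coprod_of_comp_eq_id h.1 (congrArg CoisoRModHom.T hs)
  have bijW := h.exact_W.bijective_coprod_of_comp_eq_id h.2.1 (congrArg CoisoRModHom.W hs)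
  obtain ⟨-, -, -, -, hNimg, -⟩ := h
  refine IsRegEpiMod.isIsoMod ⟨bijT.2, bijW.2, fun y hy => ?_⟩ bijT.1 bijW.1
  have hsΨ : Ψ.W (s.W (Ψ.W y)) = Ψ.W y := LinearMap.congr_fun (congrArg CoisoRModHom.W hs) _
  have hsN : s.W (Ψ.W y) ∈ F.N := s.null _ (Ψ.null _ hy)
  have hker : y - s.W (Ψ.W y) ∈ (LinearMap.ker Ψ.W : Set F.W) ∩ F.N :=
    ⟨by simp [hsΨ], F.N.sub_mem hy hsN⟩
  obtain ⟨a, ha, hΦa⟩ := hNimg.symm ▸ hker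
  refine ⟨(a, Ψ.W y), ⟨ha, Ψ.null _ hy⟩, ?_⟩
  show Φ.W a + s.W (Ψ.W y) = y
  rw [hΦa, sub_add_cancel]

end ShortExact

/-- splitting lemma: a short exact sequence
`0 → E →Φ F →Ψ G → 0` of coisotropic `A`-modules splits (i.e. `Ψ` admits a
section) iff it is isomorphic as a sequence to
`0 → E → E ⊕ G → G → 0` with the canonical inclusion and projection. -/
theorem splitting_lemma {E F G : CoisoRMod A} (Φ : CoisoRModHom E F)
    (Ψ : CoisoRModHom F G) (h : ShortExact Φ Ψ) :
    (∃ s : CoisoRModHom G F, Ψ.comp s = CoisoRModHom.id G) ↔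
      ∃ θ : CoisoRModHom F (dsum E G), IsIsoMod θ ∧
        θ.comp Φ = dsumInl E G ∧ (dsumPr E G).comp θ = Ψ := by
  constructor
  · rintro ⟨s, hs⟩
    obtain ⟨θ, hσθ, hθσ⟩ := h.isIsoMod_coprod hs
    refine ⟨θ, ⟨Φ.coprod s, hθσ, hσθ⟩, ?_, ?_⟩
    · rw [← Φ.coprod_comp_dsumInl s, ← CoisoRModHom.comp_assoc, hθσ, CoisoRModHom.id_comp]
    · rw [← h.comp_coprod_eq_dsumPr hs, CoisoRModHom.comp_assoc, hσθ, CoisoRModHom.comp_id]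
  · rintro ⟨θ, ⟨θ', hθθ', -⟩, -, hprθ⟩
    refine ⟨θ'.comp (dsumInr E G), ?_⟩
    rw [← hprθ, CoisoRModHom.comp_assoc, ← θ.comp_assoc, hθθ', CoisoRModHom.id_comp,
      dsumPr_comp_dsumInr]
end

section
/- Dual basis characterization: a coisotropic A-module P is regular projective with generating set M (a coisotropic index set with ι_M injective) if and only if there exist families (e_n)_{n∈M_T} in P_T, (f_m)_{m∈M_W} in P_W, functionals (e^n)_{n∈M_T} in Hom_{A_T}(P_T, A_T) and (f^m)_{m∈M_W} in Hom_{A_W}(P_W, A_W) such that x_T = Σ_n e_n e^n(x_T) and x_W = Σ_m f_m f^m(x_W) with only finitely many nonzero terms for each fixed element, and additionally: e_{ι_M(m)} = ι_P(f_m) for m ∈ M_W; f_m ∈ P_0 for m ∈ M_0; e^{ι_M(m)} ∘ ι_P = ι_A ∘ f^m for m ∈ M_W; e^n ∘ ι_P = 0 for n ∈ M_T \ ι_M(M_W); and f^m(x) ∈ A_0 for x ∈ P_0, m ∈ M_W \ M_0. -/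
/-! Coisotropic index sets and their morphisms. -/

universe u

variable {k : Type u} [CommRing k]

variable {A : CoisoAlg k}

/-! `P ⊕ E ≅ A^(M)` for some `E` exactly when there are morphisms `p : A^(M) → P` and
`s : P → A^(M)` with `p ∘ s = id`, the complement being `ker p`. A morphism out of `A^(M)` is
the same as the images `e_n`, `f_m` of the basis vectors, subject to compatibility with `ι` and
with the null parts; a morphism into `A^(M)` is the same as its coordinate functionals `e^n`,
`f^m`, and since `ι_M` is injective the coordinates of `ι_P x` can be read off those of `x`.
Under this dictionary `p ∘ s = id` is precisely the dual basis expansion. -/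

open Finsupp

section LinearAlgebra

variable {R V W ι : Type*} [Ring R] [AddCommGroup V] [Module R V] [AddCommGroup W] [Module R W]

theorem finsum_smul_eq_linearCombination (v : ι → V) (g : ι →₀ R) :
    ∑ᶠ i, g i • v i = linearCombination R v g := by
  rw [linearCombination_apply, Finsupp.sum]
  refine finsum_eq_sum_of_support_subset _ fun i hi => mem_support_iff.mpr fun h0 => ?_
  simp [h0] at hi

theorem linearCombination_apply_single_one (p : (ι →₀ R) →ₗ[R] V) :
    linearCombination R (fun i => p (single i 1)) = p :=
  lhom_ext fun i a => by rw [linearCombination_single, ← map_smul, smul_single_one]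

theorem finsum_smul_apply_single_of_leftInverse {p : (ι →₀ R) →ₗ[R] V} {s : V →ₗ[R] ι →₀ R}
    (h : Function.LeftInverse p s) (x : V) : ∑ᶠ i, s x i • p (single i 1) = x := by
  rw [finsum_smul_eq_linearCombination, linearCombination_apply_single_one, h x]

noncomputable def coordFinsupp (φ : ι → V →ₗ[R] R) (hφ : ∀ x, {i | φ i x ≠ 0}.Finite) :
    V →ₗ[R] ι →₀ R where
  toFun x := ofSupportFinite (fun i => φ i x) (hφ x)
  map_add' x y := by ext i; exact map_add (φ i) x y
  map_smul' a x := by ext i; exact map_smul (φ i) a x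

theorem coordFinsupp_apply (φ : ι → V →ₗ[R] R) (hφ : ∀ x, {i | φ i x ≠ 0}.Finite) (x : V)
    (i : ι) : coordFinsupp φ hφ x i = φ i x := rfl

theorem linearCombination_coordFinsupp {φ : ι → V →ₗ[R] R} (hφ : ∀ x, {i | φ i x ≠ 0}.Finite)
    {v : ι → V} (hv : ∀ x, ∑ᶠ i, φ i x • v i = x) (x : V) :
    linearCombination R v (coordFinsupp φ hφ x) = x := by
  rw [← finsum_smul_eq_linearCombination]
  exact hv x

noncomputable def LinearMap.prodKerEquivOfLeftInverse (p : V →ₗ[R] W) (s : W →ₗ[R] V)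
    (h : Function.LeftInverse p s) : V ≃ₗ[R] W × LinearMap.ker p :=
  LinearEquiv.ofLinearMap
    (f := p.prod ((LinearMap.id - s ∘ₗ p).codRestrict (LinearMap.ker p) fun y => by simp [h (p y)]))
    (g := s.coprod (LinearMap.ker p).subtype)
    (by ext <;> simp [h _])
    (by ext y; simp)

end LinearAlgebra

def dsumFst (E G : CoisoRMod A) : CoisoRModHom (dsum E G) E where
  T := LinearMap.fst A.T E.T G.T
  W := LinearMap.fst A.W E.W G.W
  comm _ := rfl
  null _ hx := hx.1

namespace CoisoRModHom

variable {F P : CoisoRMod A}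

def ker (p : CoisoRModHom F P) : CoisoRMod A where
  T := LinearMap.ker p.T
  W := LinearMap.ker p.W
  N := F.N.comap (LinearMap.ker p.W).subtype
  null_smul a ha y := F.null_smul a ha y
  str y := ⟨F.str y, by rw [LinearMap.mem_ker, p.comm, LinearMap.mem_ker.mp y.2, P.str_zero]⟩
  str_add x y := Subtype.ext (F.str_add x y)
  str_smul a y := Subtype.ext (F.str_smul a y)

theorem str_sub_str_comp (p : CoisoRModHom F P) (s : CoisoRModHom P F) (y : F.W) :
    F.str y - s.T (p.T (F.str y)) = F.str (y - s.W (p.W y)) := by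
  rw [p.comm, s.comm, sub_eq_iff_eq_add, ← F.str_add, sub_add_cancel]

noncomputable def toDsumKer (p : CoisoRModHom F P) (s : CoisoRModHom P F)
    (hT : Function.LeftInverse p.T s.T) (hW : Function.LeftInverse p.W s.W) :
    CoisoRModHom F (dsum P p.ker) where
  T := (p.T.prodKerEquivOfLeftInverse s.T hT).toLinearMap
  W := (p.W.prodKerEquivOfLeftInverse s.W hW).toLinearMap
  comm y := Prod.ext (p.comm y) (Subtype.ext (str_sub_str_comp p s y))
  null y hy := ⟨p.null y hy, F.N.sub_mem hy (s.null _ (p.null y hy))⟩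

def ofDsumKer (p : CoisoRModHom F P) (s : CoisoRModHom P F) : CoisoRModHom (dsum P p.ker) F where
  T := s.T.coprod (LinearMap.ker p.T).subtype
  W := s.W.coprod (LinearMap.ker p.W).subtype
  comm y := (congrArg (· + F.str y.2.1) (s.comm y.1)).trans (F.str_add _ _).symm
  null y hy := F.N.add_mem (s.null y.1 hy.1) hy.2

theorem isIsoMod_toDsumKer (p : CoisoRModHom F P) (s : CoisoRModHom P F)
    (hT : Function.LeftInverse p.T s.T) (hW : Function.LeftInverse p.W s.W) :
    IsIsoMod (p.toDsumKer s hT hW) :=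
  let eT := p.T.prodKerEquivOfLeftInverse s.T hT
  let eW := p.W.prodKerEquivOfLeftInverse s.W hW
  ⟨p.ofDsumKer s, ext' eT.comp_symm eW.comp_symm, ext' eT.symm_comp eW.symm_comp⟩

end CoisoRModHom

theorem exists_isIsoMod_dsum_iff_exists_leftInverse {F P : CoisoRMod A} :
    (∃ (E : CoisoRMod A) (θ : CoisoRModHom F (dsum P E)), IsIsoMod θ) ↔
      ∃ (p : CoisoRModHom F P) (s : CoisoRModHom P F),
        Function.LeftInverse p.T s.T ∧ Function.LeftInverse p.W s.W := by
  constructor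
  · rintro ⟨E, θ, Ψ, hθΨ, -⟩
    refine ⟨(dsumFst P E).comp θ, Ψ.comp (dsumInl P E), fun x => ?_, fun x => ?_⟩
    · exact congrArg Prod.fst (LinearMap.congr_fun (congrArg CoisoRModHom.T hθΨ) (x, 0))
    · exact congrArg Prod.fst (LinearMap.congr_fun (congrArg CoisoRModHom.W hθΨ) (x, 0))
  · rintro ⟨p, s, hT, hW⟩
    exact ⟨p.ker, p.toDsumKer s hT hW, p.isIsoMod_toDsumKer s hT hW⟩

section FreeModule

variable {M : CoisoSet.{u}} {P : CoisoRMod A}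

theorem freeMod_str_eq_mapDomain (g : M.W →₀ A.W) :
    (freeMod A M).str g = (g.mapRange A.str (map_zero _)).mapDomain M.str := by
  rw [mapDomain, sum_mapRange_index fun _ => single_zero _]
  rfl

theorem freeMod_str_single (m : M.W) (a : A.W) :
    (freeMod A M).str (single m a) = single (M.str m) (A.str a) := by
  rw [freeMod_str_eq_mapDomain, mapRange_single, mapDomain_single]

theorem single_mem_freeMod_N {m : M.W} (hm : m ∈ M.N) (a : A.W) :
    single m a ∈ (freeMod A M).N := fun m' hm' => by
  rw [single_eq_of_ne (by rintro rfl; exact hm' hm)]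
  exact A.N.zero_mem

theorem linearCombination_freeMod_str {e : M.T → P.T} {f : M.W → P.W}
    (hef : ∀ m, e (M.str m) = P.str (f m)) (g : M.W →₀ A.W) :
    linearCombination A.T e ((freeMod A M).str g) = P.str (linearCombination A.W f g) := by
  rw [freeMod_str_eq_mapDomain, linearCombination_mapDomain, linearCombination_apply,
    linearCombination_apply,
    sum_mapRange_index (h := fun m a => a • (e ∘ M.str) m) fun _ => zero_smul _ _, Finsupp.sum,
    Finsupp.sum]
  refine .trans ?_ (map_sum (AddMonoidHom.mk' P.str P.str_add) _ _).symm
  exact Finset.sum_congr rfl fun m _ => by simp [P.str_smul, hef]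

theorem linearCombination_mem_N {f : M.W → P.W} (hf : ∀ m ∈ M.N, f m ∈ P.N) {g : M.W →₀ A.W}
    (hg : g ∈ (freeMod A M).N) : linearCombination A.W f g ∈ P.N := by
  rw [linearCombination_apply, Finsupp.sum]
  refine P.N.sum_mem fun m _ => ?_
  by_cases hm : m ∈ M.N
  · exact P.N.smul_mem _ (hf m hm)
  · exact P.null_smul _ (hg m hm) _

noncomputable def freeModLift (e : M.T → P.T) (f : M.W → P.W)
    (hef : ∀ m, e (M.str m) = P.str (f m)) (hf : ∀ m ∈ M.N, f m ∈ P.N) :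
    CoisoRModHom (freeMod A M) P where
  T := linearCombination A.T e
  W := linearCombination A.W f
  comm := linearCombination_freeMod_str hef
  null _ hg := linearCombination_mem_N hf hg

theorem CoisoRModHom.lapply_T_str (hM : Function.Injective M.str)
    (s : CoisoRModHom P (freeMod A M)) (x : P.W) (m : M.W) :
    lapply (R := A.T) (M.str m) (s.T (P.str x)) = A.str (lapply (R := A.W) m (s.W x)) := by
  refine (congrArg _ ((s.comm x).trans (freeMod_str_eq_mapDomain _))).trans ?_
  rw [lapply_apply, mapDomain_apply hM]
  rfl

theorem CoisoRModHom.lapply_T_str_of_notMem_range (s : CoisoRModHom P (freeMod A M)) (x : P.W)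
    {n : M.T} (hn : n ∉ Set.range M.str) : lapply (R := A.T) n (s.T (P.str x)) = 0 := by
  refine (congrArg _ ((s.comm x).trans (freeMod_str_eq_mapDomain _))).trans ?_
  rw [lapply_apply, mapDomain_of_notMem_range _ _ hn]

theorem coordFinsupp_str_eq_mapDomain (hM : Function.Injective M.str)
    {eS : M.T → P.T →ₗ[A.T] A.T} {fS : M.W → P.W →ₗ[A.W] A.W} (heS : ∀ x, {n | eS n x ≠ 0}.Finite)
    (hfS : ∀ x, {m | fS m x ≠ 0}.Finite)
    (heS_str : ∀ m x, eS (M.str m) (P.str x) = A.str (fS m x))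
    (heS_notMem : ∀ n ∉ Set.range M.str, ∀ x, eS n (P.str x) = 0) (x : P.W) :
    coordFinsupp eS heS (P.str x) =
      ((coordFinsupp fS hfS x).mapRange A.str (map_zero _)).mapDomain M.str := by
  ext n
  rw [coordFinsupp_apply]
  by_cases hn : n ∈ Set.range M.str
  · obtain ⟨m, rfl⟩ := hn
    rw [mapDomain_apply hM, mapRange_apply, heS_str, coordFinsupp_apply]
  · rw [mapDomain_of_notMem_range _ _ hn, heS_notMem n hn]

noncomputable def freeModCoords (hM : Function.Injective M.str) (eS : M.T → P.T →ₗ[A.T] A.T)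
    (fS : M.W → P.W →ₗ[A.W] A.W) (heS : ∀ x, {n | eS n x ≠ 0}.Finite)
    (hfS : ∀ x, {m | fS m x ≠ 0}.Finite)
    (heS_str : ∀ m x, eS (M.str m) (P.str x) = A.str (fS m x))
    (heS_notMem : ∀ n ∉ Set.range M.str, ∀ x, eS n (P.str x) = 0)
    (hfS_N : ∀ m ∉ M.N, ∀ x ∈ P.N, fS m x ∈ A.N) :
    CoisoRModHom P (freeMod A M) where
  T := coordFinsupp eS heS
  W := coordFinsupp fS hfS
  comm x := (coordFinsupp_str_eq_mapDomain hM heS hfS heS_str heS_notMem x).trans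
    (freeMod_str_eq_mapDomain _).symm
  null x hx m hm := hfS_N m hm x hx

end FreeModule

/-- With left-module conventions the paper's `e_n e^n(x)` reads `e^n(x) • e_n`. -/
theorem dual_basis_lemma (P : CoisoRMod A) (M : CoisoSet.{u})
    (hM : Function.Injective M.str) :
    (∃ (E : CoisoRMod A)
      (θ : CoisoRModHom (freeMod A M) (dsum P E)), IsIsoMod θ) ↔
    ∃ (e : M.T → P.T) (f : M.W → P.W)
      (eS : M.T → (P.T →ₗ[A.T] A.T)) (fS : M.W → (P.W →ₗ[A.W] A.W)),
      (∀ x : P.T,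
        {n : M.T | eS n x ≠ 0}.Finite ∧ ∑ᶠ n : M.T, eS n x • e n = x) ∧
      (∀ x : P.W,
        {m : M.W | fS m x ≠ 0}.Finite ∧ ∑ᶠ m : M.W, fS m x • f m = x) ∧
      (∀ m : M.W, e (M.str m) = P.str (f m)) ∧
      (∀ m ∈ M.N, f m ∈ P.N) ∧
      (∀ (m : M.W) (x : P.W), eS (M.str m) (P.str x) = A.str (fS m x)) ∧
      (∀ n : M.T, n ∉ Set.range M.str → ∀ x : P.W, eS n (P.str x) = 0) ∧
      (∀ m : M.W, m ∉ M.N → ∀ x ∈ P.N, fS m x ∈ A.N) := by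
  rw [exists_isIsoMod_dsum_iff_exists_leftInverse]
  constructor
  · rintro ⟨p, s, hT, hW⟩
    refine ⟨fun n => p.T (single n 1), fun m => p.W (single m 1),
      fun n => lapply n ∘ₗ s.T, fun m => lapply m ∘ₗ s.W,
      fun x => ⟨(s.T x).hasFiniteSupport, finsum_smul_apply_single_of_leftInverse hT x⟩,
      fun x => ⟨(s.W x).hasFiniteSupport, finsum_smul_apply_single_of_leftInverse hW x⟩,
      fun m => ?_, fun m hm => p.null _ (single_mem_freeMod_N hm 1),
      fun m x => s.lapply_T_str hM x m, fun n hn x => s.lapply_T_str_of_notMem_range x hn,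
      fun m hm x hx => s.null x hx m hm⟩
    simpa only [freeMod_str_single, map_one] using p.comm (single m 1)
  · rintro ⟨e, f, eS, fS, he, hf, hef, hf_N, heS_str, heS_notMem, hfS_N⟩
    exact ⟨freeModLift e f hef hf_N,
      freeModCoords hM eS fS (fun x => (he x).1) (fun x => (hf x).1) heS_str heS_notMem hfS_N,
      linearCombination_coordFinsupp _ fun x => (he x).2,
      linearCombination_coordFinsupp _ fun x => (hf x).2⟩
end

section
/- Let A be a (classical) unital associative algebra and E a projective right A-module. Then the coisotropic module (E, E, 0) over the coisotropic algebra (A, A, 0) (with identity structure maps) is regular projective. -/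
/-! Coisotropic index sets and their morphisms. -/

universe u

variable {k : Type u} [CommRing k]

variable {A : CoisoAlg k}

/-- A classical unital `k`-algebra `R` as the coisotropic algebra
`(R, R, 0)` with identity structure map. -/
@[reducible] def classicalAlg (k : Type u) [CommRing k] (R : Type u) [Ring R]
    [Algebra k R] : CoisoAlg k where
  T := R
  W := R
  N := ⊥
  N_mul_right := fun x hx a => by
    have hx' : x = (0 : R) := (Submodule.mem_bot R).mp hx
    exact (Submodule.mem_bot R).mpr (by rw [hx', zero_mul])
  str := AlgHom.id k R

/-- A classical module `E` over `R` as the coisotropic module `(E, E, 0)`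
over `(R, R, 0)`. -/
@[reducible] def classicalMod (k : Type u) [CommRing k] (R : Type u) [Ring R]
    [Algebra k R] (E : Type u) [AddCommGroup E] [Module R E] :
    CoisoRMod (classicalAlg k R) where
  T := E
  W := E
  addT := inferInstance
  addW := inferInstance
  modT := inferInstanceAs (Module R E)
  modW := inferInstanceAs (Module R E)
  N := ⊥
  null_smul := fun a ha x => by
    have ha' : a = 0 := (Submodule.mem_bot _).mp ha
    exact (Submodule.mem_bot _).mpr (by rw [ha']; exact zero_smul _ x)
  str := fun x => x
  str_add := fun _ _ => rfl
  str_smul := fun _ _ => rfl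

/-! Over `(R, R, 0)` the structure map of the classical module `(E, E, 0)` is the identity, so a
morphism out of it is determined by its `W`-component, and every `R`-linear map into the
`W`-component of a target extends to such a morphism. Regular projectivity thus reduces to
lifting `W`-components along the surjection `Φ.W`, which is classical projectivity of `E`. -/

namespace CoisoRMod

variable {R : Type u} [Ring R] [Algebra k R]

instance moduleWClassical (M : CoisoRMod (classicalAlg k R)) : Module R M.W := M.modW

instance moduleTClassical (M : CoisoRMod (classicalAlg k R)) : Module R M.T := M.modT

def strLinear (M : CoisoRMod (classicalAlg k R)) : M.W →ₗ[R] M.T where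
  toFun := M.str
  map_add' := M.str_add
  map_smul' := M.str_smul

end CoisoRMod

namespace CoisoRModHom

variable {R : Type u} [Ring R] [Algebra k R]
  {E : Type u} [AddCommGroup E] [Module R E] {M : CoisoRMod (classicalAlg k R)}

def ofClassical (w : E →ₗ[R] M.W) : CoisoRModHom (classicalMod k R E) M where
  T := M.strLinear ∘ₗ w
  W := w
  comm _ := rfl
  null x hx := by
    rw [(Submodule.mem_bot R).mp hx, map_zero]
    exact M.N.zero_mem

theorem ext_classical {f g : CoisoRModHom (classicalMod k R E) M} (h : f.W = g.W) : f = g := by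
  refine ext' (LinearMap.ext fun x => ?_) h
  calc f.T x = M.str (f.W x) := f.comm x
    _ = M.str (g.W x) := by rw [h]
    _ = g.T x := (g.comm x).symm

end CoisoRModHom

/-- a classical projective module `E` over a classical
algebra `R`, regarded as the coisotropic module `(E, E, 0)` over the
coisotropic algebra `(R, R, 0)`, is regular projective. -/
theorem classical_projective_regProjective (k : Type u) [CommRing k]
    (R : Type u) [Ring R] [Algebra k R] (E : Type u) [AddCommGroup E]
    [Module R E] (hE : Module.Projective R E) :
    RegProjective (classicalMod k R E) := by
  rintro M F Φ Ψ ⟨-, hΦW, -⟩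
  obtain ⟨w, hw⟩ := Module.projective_lifting_property Φ.W Ψ.W hΦW
  exact ⟨.ofClassical w, CoisoRModHom.ext_classical hw⟩
end
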